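/- In any topological space X, every rgα-closed set is rgSC*-closed. -/

import Mathlib

open Set Topology

variable {X : Type*} [TopologicalSpace X]

/-- A set is semi-open if `A ⊆ cl (int A)`. -/
def SemiOpen (A : Set X) : Prop := A ⊆ closure (interior A)

/-- A set is semi-closed if its complement is semi-open. -/
def SemiClosed (A : Set X) : Prop := SemiOpen Aᶜ

/-- Semi-closure: the intersection of all semi-closed sets containing `A`. -/
def scl (A : Set X) : Set X := ⋂₀ {B : Set X | SemiClosed B ∧ A ⊆ B}

/-- A set is c*-open if `int (cl U) ⊆ U ⊆ cl (int U)`. -/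
def CStarOpen (U : Set X) : Prop :=
  interior (closure U) ⊆ U ∧ U ⊆ closure (interior U)

/-- A set is SC*-closed if `scl A ⊆ U` whenever `A ⊆ U` and `U` is c*-open. -/
def SCStarClosed (A : Set X) : Prop :=
  ∀ U : Set X, A ⊆ U → CStarOpen U → scl A ⊆ U

/-- A set is SC*-open if its complement is SC*-closed. -/
def SCStarOpen (A : Set X) : Prop := SCStarClosed Aᶜ

/-- SC*-closure: the intersection of all SC*-closed sets containing `A`. -/
def SCcl (A : Set X) : Set X := ⋂₀ {B : Set X | SCStarClosed B ∧ A ⊆ B}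

/-- SC*-interior: the union of all SC*-open sets contained in `A`. -/
def SCint (A : Set X) : Set X := ⋃₀ {B : Set X | SCStarOpen B ∧ B ⊆ A}

/-- Regularly open: `A = int (cl A)`. -/
def RegOpen (A : Set X) : Prop := A = interior (closure A)

/-- Regularly closed: `A = cl (int A)`. -/
def RegClosed (A : Set X) : Prop := A = closure (interior A)

/-- gSC*-closed: `SCcl A ⊆ U` whenever `A ⊆ U` and `U` is open. -/
def GSCStarClosed (A : Set X) : Prop :=
  ∀ U : Set X, A ⊆ U → IsOpen U → SCcl A ⊆ U

/-- gSC*-open: the complement is gSC*-closed. -/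
def GSCStarOpen (A : Set X) : Prop := GSCStarClosed Aᶜ

/-- SC*g-closed: `SCcl A ⊆ U` whenever `A ⊆ U` and `U` is SC*-open. -/
def SCStarGClosed (A : Set X) : Prop :=
  ∀ U : Set X, A ⊆ U → SCStarOpen U → SCcl A ⊆ U

/-- Regularly SC*-open: there is a regularly open `U` with `U ⊆ A ⊆ SCcl U`. -/
def RegSCStarOpen (A : Set X) : Prop :=
  ∃ U : Set X, RegOpen U ∧ U ⊆ A ∧ A ⊆ SCcl U

/-- rgSC*-closed: `SCcl A ⊆ U` whenever `A ⊆ U` and `U` is regularly SC*-open. -/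
def RGSCStarClosed (A : Set X) : Prop :=
  ∀ U : Set X, A ⊆ U → RegSCStarOpen U → SCcl A ⊆ U

/-- rgSC*-open: the complement is rgSC*-closed. -/
def RGSCStarOpen (A : Set X) : Prop := RGSCStarClosed Aᶜ

/-- α-open: `A ⊆ int (cl (int A))`. -/
def AlphaOpen (A : Set X) : Prop := A ⊆ interior (closure (interior A))

/-- α-closed: the complement is α-open. -/
def AlphaClosed (A : Set X) : Prop := AlphaOpen Aᶜ

/-- α-closure: the intersection of all α-closed sets containing `A`. -/
def acl (A : Set X) : Set X := ⋂₀ {B : Set X | AlphaClosed B ∧ A ⊆ B}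

/-- gα-closed: `acl A ⊆ U` whenever `A ⊆ U` and `U` is α-open. -/
def GAlphaClosed (A : Set X) : Prop :=
  ∀ U : Set X, A ⊆ U → AlphaOpen U → acl A ⊆ U

/-- Regularly α-open: there is a regularly open `U` with `U ⊆ A ⊆ acl U`. -/
def RegAlphaOpen (A : Set X) : Prop :=
  ∃ U : Set X, RegOpen U ∧ U ⊆ A ∧ A ⊆ acl U

/-- rgα-closed: `acl A ⊆ U` whenever `A ⊆ U` and `U` is regularly α-open. -/
def RGAlphaClosed (A : Set X) : Prop :=
  ∀ U : Set X, A ⊆ U → RegAlphaOpen U → acl A ⊆ U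

/-- Almost SC*-normal space. -/
def AlmostSCStarNormal (X : Type*) [TopologicalSpace X] : Prop :=
  ∀ A B : Set X, IsClosed A → RegClosed B → Disjoint A B →
    ∃ U V : Set X, SCStarOpen U ∧ SCStarOpen V ∧ A ⊆ U ∧ B ⊆ V ∧ Disjoint U V

/-- Almost normal space. -/
def AlmostNormal (X : Type*) [TopologicalSpace X] : Prop :=
  ∀ A B : Set X, IsClosed A → RegClosed B → Disjoint A B →
    ∃ U V : Set X, IsOpen U ∧ IsOpen V ∧ A ⊆ U ∧ B ⊆ V ∧ Disjoint U V

/-- Normal space. -/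
def NormalSp (X : Type*) [TopologicalSpace X] : Prop :=
  ∀ A B : Set X, IsClosed A → IsClosed B → Disjoint A B →
    ∃ U V : Set X, IsOpen U ∧ IsOpen V ∧ A ⊆ U ∧ B ⊆ V ∧ Disjoint U V

/-! Every α-open set is semi-open, so every α-closed set is semi-closed and hence SC*-closed.
Thus `SCcl A ⊆ acl A` for every `A`: a regularly SC*-open set is regularly α-open, and the
rgα-closedness of `A` bounds the smaller closure `SCcl A`. -/

theorem scl_minimal {A B : Set X} (hAB : A ⊆ B) (hB : SemiClosed B) : scl A ⊆ B :=
  sInter_subset_of_mem ⟨hB, hAB⟩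

theorem SCcl_minimal {A B : Set X} (hAB : A ⊆ B) (hB : SCStarClosed B) : SCcl A ⊆ B :=
  sInter_subset_of_mem ⟨hB, hAB⟩

theorem AlphaOpen.semiOpen {A : Set X} (hA : AlphaOpen A) : SemiOpen A :=
  hA.trans interior_subset

theorem AlphaClosed.semiClosed {A : Set X} (hA : AlphaClosed A) : SemiClosed A :=
  AlphaOpen.semiOpen hA

theorem SemiClosed.scStarClosed {A : Set X} (hA : SemiClosed A) : SCStarClosed A :=
  fun _ hAU _ => (scl_minimal subset_rfl hA).trans hAU

theorem SCcl_subset_acl (A : Set X) : SCcl A ⊆ acl A :=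
  subset_sInter fun _ ⟨hB, hAB⟩ => SCcl_minimal hAB hB.semiClosed.scStarClosed

theorem RegSCStarOpen.regAlphaOpen {U : Set X} (hU : RegSCStarOpen U) : RegAlphaOpen U :=
  let ⟨V, hV, hVU, hUV⟩ := hU
  ⟨V, hV, hVU, hUV.trans (SCcl_subset_acl V)⟩

theorem stmt15 {X : Type*} [TopologicalSpace X] (A : Set X) (hA : RGAlphaClosed A) :
    RGSCStarClosed A :=
  fun U hAU hU => (SCcl_subset_acl A).trans (hA U hAU hU.regAlphaOpen)
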